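/- Let m > 0, 𝐩 = (p₁,p₂,p₃) ∈ ℝ³, p₄ = √(‖𝐩‖² + m²), p = (p₁,p₂,p₃,p₄), and s ∈ {0,1}. Let c^k_{n,j} ∈ ℂ be coupling constants and w(−p,·) a discrete plane wave for −p. Define the spinor ψ^{(−)}_{−p,−s}(x_{n,j}) = v(𝐩,s) w(−p, x_{n,j}) ∈ ℂ⁴, where v(𝐩,s) = ((𝛔·𝐩)/(p₄+m)(−iσ₂|s⟩), −iσ₂|s⟩) in 2+2 block form. Then ψ^{(−)}_{−p,−s} satisfies the discrete free Dirac equation: (i γ·∇ − m) ψ^{(−)}_{−p,−s}(x_{n,j}) = 0 for all n, j. -/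

import Mathlib

/-!
On a plane wave `w(q,·)` every covariant difference `∇_k` acts as multiplication by `±i q_k`,
and the signs in `i γ·∇` match those of the plane wave, so `i γ·∇` acts on `w(q,·) v` as the
matrix `q̸ = q₁γ₁ + q₂γ₂ + q₃γ₃ + q₄γ₄`. For `q = −p` the Dirac equation therefore reduces to the
algebraic equation `(p̸ + m) v = 0`, which in 2+2 block form follows from `(𝛔·𝐩)² = ‖𝐩‖²` and
the mass shell relation `p₄² − m² = ‖𝐩‖²`.
-/

namespace CCausetGrowth

open Matrix

/-- The Pauli matrix σ₁. -/
def σ1 : Matrix (Fin 2) (Fin 2) ℂ := !![0, 1; 1, 0]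

/-- The Pauli matrix σ₂. -/
def σ2 : Matrix (Fin 2) (Fin 2) ℂ := !![0, -Complex.I; Complex.I, 0]

/-- The Pauli matrix σ₃. -/
def σ3 : Matrix (Fin 2) (Fin 2) ℂ := !![1, 0; 0, -1]

/-- The gamma matrix `γ₁ = [[0, −σ₁], [σ₁, 0]]` in 2+2 block form. -/
def γ1 : Matrix (Fin 4) (Fin 4) ℂ :=
  !![0, 0, 0, -1; 0, 0, -1, 0; 0, 1, 0, 0; 1, 0, 0, 0]

/-- The gamma matrix `γ₂ = [[0, −σ₂], [σ₂, 0]]` in 2+2 block form. -/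
def γ2 : Matrix (Fin 4) (Fin 4) ℂ :=
  !![0, 0, 0, Complex.I; 0, 0, -Complex.I, 0; 0, -Complex.I, 0, 0; Complex.I, 0, 0, 0]

/-- The gamma matrix `γ₃ = [[0, −σ₃], [σ₃, 0]]` in 2+2 block form. -/
def γ3 : Matrix (Fin 4) (Fin 4) ℂ :=
  !![0, 0, -1, 0; 0, 0, 0, 1; 1, 0, 0, 0; 0, -1, 0, 0]

/-- The gamma matrix `γ₄ = [[σ₄, 0], [0, −σ₄]]` in 2+2 block form. -/
def γ4 : Matrix (Fin 4) (Fin 4) ℂ :=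
  !![1, 0, 0, 0; 0, 1, 0, 0; 0, 0, -1, 0; 0, 0, 0, -1]

/-- The qubits `|0⟩ = (1,0)` and `|1⟩ = (0,1)` in `ℂ²`. -/
def ket (s : Fin 2) : Fin 2 → ℂ := fun i => if i = s then 1 else 0

/-- For `𝐩 ∈ ℝ³`, the matrix `𝛔·𝐩 = p₁σ₁ + p₂σ₂ + p₃σ₃`. -/
noncomputable def sigma3Dot (pv : Fin 3 → ℝ) : Matrix (Fin 2) (Fin 2) ℂ :=
  (pv 0 : ℂ) • σ1 + (pv 1 : ℂ) • σ2 + (pv 2 : ℂ) • σ3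

/-- The covariant difference operator in direction `k` (for `k : Fin 4`, representing
direction `k+1`), acting componentwise on `ℂ⁴`-valued functions (spinors) of the
vertices: `∇_k f(x_{n,j}) = f(x_{n+2,4j+k}) − c^k_{n+2,4j+k} · f(x_{n,j})`, where
`c k N J` is the coupling constant `c^{k+1}_{N,J}`. -/
noncomputable def nablaS (c : Fin 4 → ℕ → ℕ → ℂ) (k : Fin 4)
    (f : ℕ → ℕ → Fin 4 → ℂ) (n j : ℕ) : Fin 4 → ℂ :=
  f (n + 2) (4 * j + (k : ℕ)) - c k (n + 2) (4 * j + (k : ℕ)) • f n j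

/-- `w` is a discrete plane wave in direction `q = (q₁,q₂,q₃,q₄)`:
`w(x_{n+2,4j+k−1}) = (c^k_{n+2,4j+k−1} + i·q_k)·w(x_{n,j})` for `k = 1,2,3` and
`w(x_{n+2,4j+3}) = (c^4_{n+2,4j+3} − i·q₄)·w(x_{n,j})`, at every vertex `x_{n,j}`. -/
def IsPlaneWave (c : Fin 4 → ℕ → ℕ → ℂ) (q : Fin 4 → ℝ) (w : ℕ → ℕ → ℂ) : Prop :=
  ∀ n j : ℕ, 1 ≤ n → j < 2 ^ (n - 1) → ∀ k : Fin 4,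
    w (n + 2) (4 * j + (k : ℕ)) =
      (c k (n + 2) (4 * j + (k : ℕ)) +
        (if (k : ℕ) = 3 then -1 else 1) * Complex.I * (q k : ℂ)) * w n j

/-- The discrete free Dirac operator `i γ·∇ = −iγ₁∇₁ − iγ₂∇₂ − iγ₃∇₃ + iγ₄∇₄` applied to
a spinor-valued function `ψ` at the vertex `x_{n,j}`. -/
noncomputable def diracOp (c : Fin 4 → ℕ → ℕ → ℂ) (ψ : ℕ → ℕ → Fin 4 → ℂ)
    (n j : ℕ) : Fin 4 → ℂ :=
  (-Complex.I) • γ1.mulVec (nablaS c 0 ψ n j) + (-Complex.I) • γ2.mulVec (nablaS c 1 ψ n j)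
    + (-Complex.I) • γ3.mulVec (nablaS c 2 ψ n j) + Complex.I • γ4.mulVec (nablaS c 3 ψ n j)

noncomputable def gammaDot (q : Fin 4 → ℝ) : Matrix (Fin 4) (Fin 4) ℂ :=
  (q 0 : ℂ) • γ1 + (q 1 : ℂ) • γ2 + (q 2 : ℂ) • γ3 + (q 3 : ℂ) • γ4

def spinor (u χ : Fin 2 → ℂ) : Fin 4 → ℂ := ![u 0, u 1, χ 0, χ 1]

theorem sigma3Dot_mul_self (pv : Fin 3 → ℝ) :
    sigma3Dot pv * sigma3Dot pv = ((pv 0 ^ 2 + pv 1 ^ 2 + pv 2 ^ 2 : ℝ) : ℂ) • 1 := by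
  ext i j
  fin_cases i <;> fin_cases j <;>
    simp [sigma3Dot, σ1, σ2, σ3, Matrix.mul_apply, Fin.sum_univ_two] <;> ring_nf <;>
    simp [Complex.I_sq]

theorem gammaDot_neg (q : Fin 4 → ℝ) : gammaDot (-q) = -gammaDot q := by
  simp only [gammaDot, Pi.neg_apply, Complex.ofReal_neg, neg_smul]
  abel

theorem gammaDot_mulVec_spinor (pv : Fin 3 → ℝ) (p4 : ℝ) (u χ : Fin 2 → ℂ) :
    gammaDot ![pv 0, pv 1, pv 2, p4] *ᵥ spinor u χ =
      spinor ((p4 : ℂ) • u - sigma3Dot pv *ᵥ χ) (sigma3Dot pv *ᵥ u - (p4 : ℂ) • χ) := by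
  ext i
  fin_cases i <;>
    simp [gammaDot, spinor, γ1, γ2, γ3, γ4, sigma3Dot, σ1, σ2, σ3, Matrix.mulVec, dotProduct,
      Fin.sum_univ_four, Fin.sum_univ_two] <;> ring

theorem smul_spinor (a : ℂ) (u χ : Fin 2 → ℂ) : a • spinor u χ = spinor (a • u) (a • χ) := by
  ext i
  fin_cases i <;> rfl

theorem gammaDot_mulVec_spinor_of_mass_shell {m p4 : ℝ} {pv : Fin 3 → ℝ}
    (hp4 : p4 ^ 2 = pv 0 ^ 2 + pv 1 ^ 2 + pv 2 ^ 2 + m ^ 2) (hpm : p4 + m ≠ 0)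
    (χ : Fin 2 → ℂ) :
    gammaDot ![pv 0, pv 1, pv 2, p4] *ᵥ spinor (((p4 + m : ℝ) : ℂ)⁻¹ • sigma3Dot pv *ᵥ χ) χ =
      -(m : ℂ) • spinor (((p4 + m : ℝ) : ℂ)⁻¹ • sigma3Dot pv *ᵥ χ) χ := by
  have hσσ : sigma3Dot pv *ᵥ (sigma3Dot pv *ᵥ χ) = ((p4 ^ 2 - m ^ 2 : ℝ) : ℂ) • χ := by
    rw [mulVec_mulVec, sigma3Dot_mul_self, smul_mulVec, one_mulVec, hp4]
    ring_nf
  have hpmC : ((p4 + m : ℝ) : ℂ) ≠ 0 := Complex.ofReal_ne_zero.mpr hpm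
  rw [gammaDot_mulVec_spinor, smul_spinor, mulVec_smul, hσσ]
  congr 1 <;> ext i <;> simp only [Pi.sub_apply, Pi.smul_apply, smul_eq_mul] <;>
    push_cast at hpmC ⊢ <;> field_simp <;> ring

theorem nablaS_of_isPlaneWave {c : Fin 4 → ℕ → ℕ → ℂ} {q : Fin 4 → ℝ} {w : ℕ → ℕ → ℂ}
    (hw : IsPlaneWave c q w) {v : Fin 4 → ℂ} {ψ : ℕ → ℕ → Fin 4 → ℂ}
    (hψ : ∀ n j, ψ n j = w n j • v) {n j : ℕ} (hn : 1 ≤ n) (hj : j < 2 ^ (n - 1)) (k : Fin 4) :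
    nablaS c k ψ n j = ((if (k : ℕ) = 3 then -1 else 1) * Complex.I * q k) • ψ n j := by
  rw [nablaS, hψ, hψ, hw n j hn hj k]
  module

theorem diracOp_of_isPlaneWave {c : Fin 4 → ℕ → ℕ → ℂ} {q : Fin 4 → ℝ} {w : ℕ → ℕ → ℂ}
    (hw : IsPlaneWave c q w) {v : Fin 4 → ℂ} {ψ : ℕ → ℕ → Fin 4 → ℂ}
    (hψ : ∀ n j, ψ n j = w n j • v) {n j : ℕ} (hn : 1 ≤ n) (hj : j < 2 ^ (n - 1)) :
    diracOp c ψ n j = gammaDot q *ᵥ ψ n j := by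
  simp only [diracOp, nablaS_of_isPlaneWave hw hψ hn hj, mulVec_smul, gammaDot, add_mulVec,
    smul_mulVec, smul_smul]
  match_scalars <;> simp [← mul_assoc]

/-- let `m > 0`, `𝐩 ∈ ℝ³`, `p₄ = √(‖𝐩‖² + m²)`, `p = (𝐩, p₄)`, and let
`w(−p,·)` be a discrete plane wave for `−p`.  For `s ∈ {0,1}`, the spinor
`ψ⁻_{−p,−s}(x_{n,j}) = v(𝐩,s)·w(−p,x_{n,j})`, with
`v(𝐩,s) = ((𝛔·𝐩)/(p₄+m)(−iσ₂|s⟩), −iσ₂|s⟩)` in 2+2 block form, satisfies the discrete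
free Dirac equation `(i γ·∇ − m) ψ⁻_{−p,−s}(x_{n,j}) = 0`. -/
theorem discrete_dirac_equation_neg (m : ℝ) (hm : 0 < m) (pv : Fin 3 → ℝ) (p4 : ℝ)
    (hp4 : p4 = Real.sqrt ((pv 0) ^ 2 + (pv 1) ^ 2 + (pv 2) ^ 2 + m ^ 2))
    (c : Fin 4 → ℕ → ℕ → ℂ) (w : ℕ → ℕ → ℂ)
    (hw : IsPlaneWave c ![-(pv 0), -(pv 1), -(pv 2), -p4] w)
    (s : Fin 2) (v : Fin 4 → ℂ)
    (hv : v = ![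
      (((p4 + m : ℝ) : ℂ)⁻¹ • (sigma3Dot pv).mulVec ((-Complex.I) • σ2.mulVec (ket s))) 0,
      (((p4 + m : ℝ) : ℂ)⁻¹ • (sigma3Dot pv).mulVec ((-Complex.I) • σ2.mulVec (ket s))) 1,
      ((-Complex.I) • σ2.mulVec (ket s)) 0,
      ((-Complex.I) • σ2.mulVec (ket s)) 1])
    (ψ : ℕ → ℕ → Fin 4 → ℂ) (hψ : ∀ n j : ℕ, ψ n j = w n j • v) :
    ∀ n j : ℕ, 1 ≤ n → j < 2 ^ (n - 1) →
      diracOp c ψ n j - (m : ℂ) • ψ n j = 0 := by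
  intro n j hn hj
  have hp4sq : p4 ^ 2 = pv 0 ^ 2 + pv 1 ^ 2 + pv 2 ^ 2 + m ^ 2 := by
    rw [hp4, Real.sq_sqrt (by positivity)]
  have hpm : p4 + m ≠ 0 := by
    have : 0 ≤ p4 := hp4 ▸ Real.sqrt_nonneg _
    positivity
  have hq : ![-(pv 0), -(pv 1), -(pv 2), -p4] = -![pv 0, pv 1, pv 2, p4] := by
    simp only [Matrix.neg_cons, Matrix.neg_empty]
  have hvp : gammaDot ![pv 0, pv 1, pv 2, p4] *ᵥ v = -(m : ℂ) • v := by
    rw [hv]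
    exact gammaDot_mulVec_spinor_of_mass_shell hp4sq hpm _
  rw [diracOp_of_isPlaneWave hw hψ hn hj, hq, gammaDot_neg, hψ, neg_mulVec, mulVec_smul, hvp,
    smul_comm, neg_smul, neg_neg, sub_self]

end CCausetGrowth
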